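/- arXiv:0806.1088 — 3 statements merged into one kernel-verified Lean document; each statement's English description precedes it below -/
import Mathlib

section
/- Let G be an unmixed bipartite graph on {x_1,...,x_n} ∪ {y_1,...,y_n} with {x_i,y_i} ∈ E(G) for all i. If C and C' are minimal vertex covers with C̄ = {i : x_i ∈ C} and C̄' = {i : x_i ∈ C'}, then the set {x_i : i ∈ C̄ ∪ C̄'} ∪ {y_j : j ∉ C̄ ∪ C̄'} is also a minimal vertex cover of G. -/
/-! Every vertex cover contains an endpoint of each matching edge `{x_i, y_i}`, so it has at least
`n` vertices, and a cover with `n` vertices is minimal. As `{y_1, …, y_n}` is such a cover,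
unmixedness makes every minimal cover meet each matching edge exactly once. Now take an edge
`x_i y_j` with `j ∈ C̄ ∪ C̄'`, say `j ∈ C̄`: then `y_j ∉ C`, so `x_i ∈ C` and `i ∈ C̄ ∪ C̄'`.
Hence `coverOf (C̄ ∪ C̄')` is a cover, and it has `n` vertices. -/

open Finset

/-- `C` is a vertex cover of the graph `G`. -/
def IsVC {α : Type*} (G : SimpleGraph α) (C : Finset α) : Prop :=
  ∀ ⦃u v : α⦄, G.Adj u v → u ∈ C ∨ v ∈ C

/-- `C` is a minimal vertex cover of the graph `G`. -/
def IsMinVC {α : Type*} (G : SimpleGraph α) (C : Finset α) : Prop :=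
  IsVC G C ∧ ∀ C' ⊂ C, ¬ IsVC G C'

/-- `G` is unmixed: all minimal vertex covers have the same cardinality. -/
def Unmixed {α : Type*} (G : SimpleGraph α) : Prop :=
  ∀ C C' : Finset α, IsMinVC G C → IsMinVC G C' → C.card = C'.card

/-- `G` is bipartite with respect to the given sum decomposition of its vertex set:
all edges go between the two parts. -/
def Bip {m n : ℕ} (G : SimpleGraph (Fin m ⊕ Fin n)) : Prop :=
  (∀ i j, ¬ G.Adj (Sum.inl i) (Sum.inl j)) ∧ ∀ i j, ¬ G.Adj (Sum.inr i) (Sum.inr j)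

/-- the set `{x_i : i ∈ S} ∪ {y_j : j ∉ S}`, where `x_i = Sum.inl i`, `y_j = Sum.inr j`. -/
def coverOf {n : ℕ} (S : Finset (Fin n)) : Finset (Fin n ⊕ Fin n) :=
  S.image Sum.inl ∪ Sᶜ.image Sum.inr

/-- the "x-part" `C̄ = {i : x_i ∈ C}` of a set of vertices `C`. -/
def xpart {n : ℕ} (C : Finset (Fin n ⊕ Fin n)) : Finset (Fin n) :=
  Finset.univ.filter fun i => Sum.inl i ∈ C

section PerfectMatching

variable {ι : Type*} [Fintype ι]

lemma fintypeCard_le_card_of_forall_inl_or_inr_mem {C : Finset (ι ⊕ ι)}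
    (hC : ∀ i, Sum.inl i ∈ C ∨ Sum.inr i ∈ C) : Fintype.card ι ≤ C.card := by
  classical
  calc Fintype.card ι = (univ : Finset ι).card := card_univ.symm
    _ ≤ (C.toLeft ∪ C.toRight).card := card_le_card fun i _ => by simpa using hC i
    _ ≤ C.toLeft.card + C.toRight.card := card_union_le _ _
    _ = C.card := card_toLeft_add_card_toRight

variable {G : SimpleGraph (ι ⊕ ι)}

lemma IsVC.fintypeCard_le_card (hmatch : ∀ i, G.Adj (Sum.inl i) (Sum.inr i))
    {C : Finset (ι ⊕ ι)} (hC : IsVC G C) : Fintype.card ι ≤ C.card :=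
  fintypeCard_le_card_of_forall_inl_or_inr_mem fun i => hC (hmatch i)

lemma IsVC.isMinVC_of_card_le (hmatch : ∀ i, G.Adj (Sum.inl i) (Sum.inr i))
    {C : Finset (ι ⊕ ι)} (hC : IsVC G C) (hcard : C.card ≤ Fintype.card ι) : IsMinVC G C :=
  ⟨hC, fun _ hD hDC => (hDC.fintypeCard_le_card hmatch).not_gt ((card_lt_card hD).trans_le hcard)⟩

lemma IsVC.inr_notMem_of_inl_mem [DecidableEq ι]
    (hmatch : ∀ i, G.Adj (Sum.inl i) (Sum.inr i)) {C : Finset (ι ⊕ ι)} (hC : IsVC G C)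
    (hcard : C.card = Fintype.card ι) {j : ι} (hj : Sum.inl j ∈ C) : Sum.inr j ∉ C := by
  intro hj'
  have hle : Fintype.card ι ≤ (C.erase (Sum.inr j)).card := by
    refine fintypeCard_le_card_of_forall_inl_or_inr_mem fun i => ?_
    by_cases hij : i = j
    · subst hij; simpa using hj
    · simpa [hij] using hC (hmatch i)
  rw [card_erase_of_mem hj'] at hle
  have : 0 < C.card := card_pos.2 ⟨_, hj⟩
  omega

end PerfectMatching

section Bipartite

variable {n : ℕ}

lemma mem_coverOf_inl (S : Finset (Fin n)) (i : Fin n) :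
    Sum.inl i ∈ coverOf S ↔ i ∈ S := by simp [coverOf]

lemma mem_coverOf_inr (S : Finset (Fin n)) (j : Fin n) :
    Sum.inr j ∈ coverOf S ↔ j ∉ S := by simp [coverOf]

lemma card_coverOf (S : Finset (Fin n)) : (coverOf S).card = n := by
  rw [coverOf, card_union_of_disjoint (by simp [Finset.disjoint_left]),
    card_image_of_injective _ Sum.inl_injective,
    card_image_of_injective _ Sum.inr_injective, card_add_card_compl, Fintype.card_fin]

lemma isVC_coverOf {G : SimpleGraph (Fin n ⊕ Fin n)} (hbip : Bip G) {S : Finset (Fin n)}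
    (hS : ∀ i j, G.Adj (Sum.inl i) (Sum.inr j) → i ∈ S ∨ j ∉ S) : IsVC G (coverOf S) := by
  rintro (i | i) (j | j) hadj
  · exact (hbip.1 i j hadj).elim
  · simpa only [mem_coverOf_inl, mem_coverOf_inr] using hS i j hadj
  · simpa only [mem_coverOf_inl, mem_coverOf_inr, or_comm] using hS j i hadj.symm
  · exact (hbip.2 i j hadj).elim

lemma IsMinVC.card_eq {G : SimpleGraph (Fin n ⊕ Fin n)} (hbip : Bip G)
    (hmatch : ∀ i, G.Adj (Sum.inl i) (Sum.inr i)) (hunm : Unmixed G)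
    {C : Finset (Fin n ⊕ Fin n)} (hC : IsMinVC G C) : C.card = n := by
  have hY : IsVC G (coverOf ∅) := isVC_coverOf hbip fun _ _ _ => Or.inr (notMem_empty _)
  have hYmin := hY.isMinVC_of_card_le hmatch (by simp [card_coverOf])
  rw [hunm C _ hC hYmin, card_coverOf]

lemma IsMinVC.inl_mem_of_adj_of_inl_mem {G : SimpleGraph (Fin n ⊕ Fin n)} (hbip : Bip G)
    (hmatch : ∀ i, G.Adj (Sum.inl i) (Sum.inr i)) (hunm : Unmixed G)
    {C : Finset (Fin n ⊕ Fin n)} (hC : IsMinVC G C) {i j : Fin n}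
    (hadj : G.Adj (Sum.inl i) (Sum.inr j)) (hj : Sum.inl j ∈ C) : Sum.inl i ∈ C :=
  (hC.1 hadj).resolve_right <|
    hC.1.inr_notMem_of_inl_mem hmatch (by simpa using hC.card_eq hbip hmatch hunm) hj

end Bipartite

/-- unions: if `C`, `C'` are minimal vertex covers then so is the
set corresponding to `C̄ ∪ C̄'`. -/
theorem stmt_4 {n : ℕ} (G : SimpleGraph (Fin n ⊕ Fin n)) (hbip : Bip G)
    (hmatch : ∀ i, G.Adj (Sum.inl i) (Sum.inr i)) (hunm : Unmixed G)
    (C C' : Finset (Fin n ⊕ Fin n)) (hC : IsMinVC G C) (hC' : IsMinVC G C') :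
    IsMinVC G (coverOf (xpart C ∪ xpart C')) := by
  refine IsVC.isMinVC_of_card_le hmatch (isVC_coverOf hbip fun i j hadj => ?_)
    (by simp [card_coverOf])
  simp only [xpart, mem_union, mem_filter, mem_univ, true_and]
  by_cases hj : Sum.inl j ∈ C ∨ Sum.inl j ∈ C'
  · exact Or.inl (hj.imp (hC.inl_mem_of_adj_of_inl_mem hbip hmatch hunm hadj)
      (hC'.inl_mem_of_adj_of_inl_mem hbip hmatch hunm hadj))
  · exact Or.inr hj
end

section
/- Let P = {p_1,...,p_n} be a finite poset and G_P the bipartite graph with edges {x_i,y_j} for p_i ≤ p_j. Then the map α ↦ α_x ∪ α_y is a bijection between order ideals of P and minimal vertex covers of G_P. -/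
open Finset

/-- the bipartite graph `G_P` of a poset: edges `{x_i, y_j}` whenever `p_i ≤ p_j`. -/
def posetGraph (P : Type*) [PartialOrder P] : SimpleGraph (P ⊕ P) where
  Adj u v := (∃ i j, i ≤ j ∧ u = Sum.inl i ∧ v = Sum.inr j) ∨
    (∃ i j, i ≤ j ∧ u = Sum.inr j ∧ v = Sum.inl i)
  symm := by
    constructor
    rintro u v (⟨i, j, h, rfl, rfl⟩ | ⟨i, j, h, rfl, rfl⟩)
    · exact Or.inr ⟨i, j, h, rfl, rfl⟩
    · exact Or.inl ⟨i, j, h, rfl, rfl⟩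
  loopless := by
    constructor
    rintro u (⟨i, j, h, rfl, heq⟩ | ⟨i, j, h, rfl, heq⟩) <;> simp at heq

/-- `α` is an order ideal (poset ideal, downward closed subset) of `P`. -/
def IsOrderIdeal {P : Type*} [PartialOrder P] (α : Finset P) : Prop :=
  ∀ a ∈ α, ∀ b, b ≤ a → b ∈ α

/-- the set `α_x ∪ α_y = {x_i : p_i ∈ α} ∪ {y_j : p_j ∉ α}` -/
def idealCover {P : Type*} [PartialOrder P] [Fintype P] [DecidableEq P]
    (α : Finset P) : Finset (P ⊕ P) :=
  α.image Sum.inl ∪ αᶜ.image Sum.inr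

/-! Both directions rest on one observation: a vertex cover is minimal exactly when each of its
vertices has a neighbour outside it. Every minimal vertex cover `C` of `G_P` contains exactly one of
`x_i, y_i` for each `i`: at least one because of the edge `x_i y_i`, and not both, since a
neighbour `x_a ∉ C` of `y_i` and a neighbour `y_b ∉ C` of `x_i` give `a ≤ i ≤ b`, so the edge
`x_a y_b` would be uncovered. Hence `C = α_x ∪ α_y` for `α = {i : x_i ∈ C}`, and `α` is an order
ideal because `C` covers the edges `x_b y_a` with `b ≤ a`. -/

section VertexCover

variable {V : Type*} {G : SimpleGraph V} {C : Finset V}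

theorem isMinVC_iff_forall_exists_adj_notMem :
    IsMinVC G C ↔ IsVC G C ∧ ∀ v ∈ C, ∃ w, G.Adj v w ∧ w ∉ C := by
  classical
  refine ⟨fun ⟨hC, hmin⟩ => ⟨hC, fun v hv => ?_⟩, fun ⟨hC, hnbr⟩ => ⟨hC, fun C' hC' hC'VC => ?_⟩⟩
  · by_contra! hall
    refine hmin (C.erase v) (erase_ssubset hv) fun u w huw => ?_
    rcases hC huw with hu | hw
    · by_cases huv : u = v
      · subst huv
        exact Or.inr (mem_erase.2 ⟨huw.ne.symm, hall w huw⟩)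
      · exact Or.inl (mem_erase.2 ⟨huv, hu⟩)
    · by_cases hwv : w = v
      · subst hwv
        exact Or.inl (mem_erase.2 ⟨huw.ne, hall u huw.symm⟩)
      · exact Or.inr (mem_erase.2 ⟨hwv, hw⟩)
  · obtain ⟨v, hvC, hvC'⟩ := exists_of_ssubset hC'
    obtain ⟨w, hvw, hwC⟩ := hnbr v hvC
    rcases hC'VC hvw with hv | hw
    · exact hvC' hv
    · exact hwC (hC'.subset hw)

end VertexCover

section PosetGraph

variable {P : Type*} [PartialOrder P] {i j : P}

@[simp]
theorem posetGraph_adj_inl_inr : (posetGraph P).Adj (.inl i) (.inr j) ↔ i ≤ j := by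
  simp [posetGraph]

@[simp]
theorem posetGraph_adj_inr_inl : (posetGraph P).Adj (.inr j) (.inl i) ↔ i ≤ j := by
  simp [posetGraph]

@[simp]
theorem posetGraph_not_adj_inl_inl : ¬ (posetGraph P).Adj (.inl i) (.inl j) := by
  simp [posetGraph]

@[simp]
theorem posetGraph_not_adj_inr_inr : ¬ (posetGraph P).Adj (.inr i) (.inr j) := by
  simp [posetGraph]

variable {C : Finset (P ⊕ P)}

theorem isVC_posetGraph_iff :
    IsVC (posetGraph P) C ↔ ∀ ⦃i j⦄, i ≤ j → .inl i ∈ C ∨ .inr j ∈ C := by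
  refine ⟨fun hC i j hij => hC (posetGraph_adj_inl_inr.2 hij), fun hC => ?_⟩
  rintro (i | j) (i' | j') h <;> simp only [posetGraph_not_adj_inl_inl,
    posetGraph_not_adj_inr_inr, posetGraph_adj_inl_inr, posetGraph_adj_inr_inl] at h
  · exact hC h
  · exact (hC h).symm

theorem IsMinVC.inr_mem_iff_inl_notMem (hC : IsMinVC (posetGraph P) C) (i : P) :
    .inr i ∈ C ↔ .inl i ∉ C := by
  refine ⟨fun hy hx => ?_, (isVC_posetGraph_iff.1 hC.1 le_rfl).resolve_left⟩
  have hnbr := (isMinVC_iff_forall_exists_adj_notMem.1 hC).2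
  obtain ⟨a, hai, haC⟩ : ∃ a, a ≤ i ∧ .inl a ∉ C := by
    obtain ⟨w | w, hw, hwC⟩ := hnbr _ hy
    · exact ⟨w, posetGraph_adj_inr_inl.1 hw, hwC⟩
    · exact absurd hw posetGraph_not_adj_inr_inr
  obtain ⟨b, hib, hbC⟩ : ∃ b, i ≤ b ∧ .inr b ∉ C := by
    obtain ⟨w | w, hw, hwC⟩ := hnbr _ hx
    · exact absurd hw posetGraph_not_adj_inl_inl
    · exact ⟨w, posetGraph_adj_inl_inr.1 hw, hwC⟩
  exact (isVC_posetGraph_iff.1 hC.1 (hai.trans hib)).elim haC hbC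

theorem IsMinVC.isOrderIdeal_toLeft (hC : IsMinVC (posetGraph P) C) : IsOrderIdeal C.toLeft := by
  intro a ha b hba
  rw [mem_toLeft] at ha ⊢
  have hya : .inr a ∉ C := fun h => (hC.inr_mem_iff_inl_notMem a).1 h ha
  exact (isVC_posetGraph_iff.1 hC.1 hba).resolve_right hya

variable [Fintype P] [DecidableEq P]

@[simp]
theorem inl_mem_idealCover {α : Finset P} : .inl i ∈ idealCover α ↔ i ∈ α := by
  simp [idealCover]

@[simp]
theorem inr_mem_idealCover {α : Finset P} : .inr i ∈ idealCover α ↔ i ∉ α := by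
  simp [idealCover]

theorem idealCover_injective : Function.Injective (idealCover (P := P)) := fun α β h =>
  Finset.ext fun i => by rw [← inl_mem_idealCover, h, inl_mem_idealCover]

theorem isMinVC_idealCover {α : Finset P} (hα : IsOrderIdeal α) :
    IsMinVC (posetGraph P) (idealCover α) := by
  refine isMinVC_iff_forall_exists_adj_notMem.2 ⟨?_, ?_⟩
  · refine isVC_posetGraph_iff.2 fun i j hij => ?_
    rw [inl_mem_idealCover, inr_mem_idealCover, or_iff_not_imp_left]
    exact fun hi hj => hi (hα j hj i hij)
  · rintro (i | i) hv
    · exact ⟨.inr i, posetGraph_adj_inl_inr.2 le_rfl, by simpa using hv⟩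
    · exact ⟨.inl i, posetGraph_adj_inr_inl.2 le_rfl, by simpa using hv⟩

theorem IsMinVC.idealCover_toLeft (hC : IsMinVC (posetGraph P) C) : idealCover C.toLeft = C := by
  ext (i | i)
  · simp
  · simp [hC.inr_mem_iff_inl_notMem]

end PosetGraph

/-- `α ↦ α_x ∪ α_y` is a bijection between order ideals of `P` and
minimal vertex covers of `G_P`. -/
theorem stmt_11 (P : Type*) [PartialOrder P] [Fintype P] [DecidableEq P] :
    Set.BijOn (idealCover (P := P)) {α | IsOrderIdeal α}
      {C | IsMinVC (posetGraph P) C} :=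
  ⟨fun _ hα => isMinVC_idealCover hα, idealCover_injective.injOn,
    fun C hC => ⟨C.toLeft, hC.isOrderIdeal_toLeft, hC.idealCover_toLeft⟩⟩
end

section
/- Let L be a sublattice of the Boolean lattice on [n] containing ∅ and [n], and define G(L) to be the bipartite graph on {x_1,...,x_n} ∪ {y_1,...,y_n} whose minimal vertex covers are exactly {x_i : i ∈ S} ∪ {y_j : j ∉ S} for S ∈ L. Then G(L) is Cohen–Macaulay if and only if L is a full sublattice (rank of L equals n), using the characterization that Cohen–Macaulay bipartite graphs are exactly the graphs G_P for finite posets P. -/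
open Finset

/-!
The relation `a ⊑ b :↔ x_a ~ y_b` of `G(L)` is always the preorder "every member of `L` that
contains `b` contains `a`": if `x_a` and `y_b` are not adjacent, every vertex but these two is a
cover, and a minimal cover inside it is `coverOf S` with `b ∈ S ∌ a`. A full chain separates
points, so for full `L` this preorder is a partial order `P` and `G(L) = G_P`. Conversely, if
`G = G_P` then `coverOf S` is a minimal cover for every order ideal `S` (the edges `x_a y_a` make it
minimal), and the initial segments of a linear extension of `P` form a full chain of ideals.
-/

theorem IsVC.exists_isMinVC_subset {α : Type*} {G : SimpleGraph α} {C : Finset α}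
    (hC : IsVC G C) : ∃ C₀ ⊆ C, IsMinVC G C₀ := by
  obtain ⟨C₀, hle, hmin⟩ := exists_minimal_le_of_wellFoundedLT (IsVC G) C hC
  exact ⟨C₀, hle, hmin.1, fun C' hlt hC' => hlt.not_ge (hmin.2 hC' hlt.le)⟩

section coverOf

variable {n : ℕ} {G : SimpleGraph (Fin n ⊕ Fin n)} {L : Set (Finset (Fin n))}
  {S : Finset (Fin n)}

@[simp] lemma inl_mem_coverOf {a : Fin n} : Sum.inl a ∈ coverOf S ↔ a ∈ S := by
  simp [coverOf]

@[simp] lemma inr_mem_coverOf {b : Fin n} : Sum.inr b ∈ coverOf S ↔ b ∉ S := by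
  simp [coverOf]

lemma coverOf_injective : Function.Injective (coverOf (n := n)) := fun S T h => by
  ext a
  rw [← inl_mem_coverOf, h, inl_mem_coverOf]

lemma isVC_coverOf_iff (hbip : Bip G) :
    IsVC G (coverOf S) ↔ ∀ a b, G.Adj (.inl a) (.inr b) → b ∈ S → a ∈ S := by
  constructor
  · intro h a b hab hb
    simpa [hb] using h hab
  · rintro h (a | b) (a' | b') hadj
    · exact (hbip.1 a a' hadj).elim
    · by_cases hb : b' ∈ S <;> simp [hb, h a b' hadj]
    · by_cases hb : b ∈ S <;> simp [hb, h a' b hadj.symm]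
    · exact (hbip.2 b b' hadj).elim

lemma IsVC.isMinVC_coverOf (hdiag : ∀ a, G.Adj (.inl a) (.inr a)) (h : IsVC G (coverOf S)) :
    IsMinVC G (coverOf S) := by
  refine ⟨h, fun C hC hvc => ?_⟩
  obtain ⟨v, hv, hvC⟩ := exists_of_ssubset hC
  rcases v with a | a
  · have ha : a ∈ S := inl_mem_coverOf.1 hv
    rcases hvc (hdiag a) with h | h
    · exact hvC h
    · exact inr_mem_coverOf.1 (hC.subset h) ha
  · have ha : a ∉ S := inr_mem_coverOf.1 hv
    rcases hvc (hdiag a) with h | h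
    · exact ha (inl_mem_coverOf.1 (hC.subset h))
    · exact hvC h

lemma isMinVC_coverOf_of_mem (hG : ∀ C, IsMinVC G C ↔ ∃ S ∈ L, C = coverOf S) (hS : S ∈ L) :
    IsMinVC G (coverOf S) :=
  (hG _).2 ⟨S, hS, rfl⟩

lemma mem_of_isMinVC_coverOf (hG : ∀ C, IsMinVC G C ↔ ∃ S ∈ L, C = coverOf S)
    (h : IsMinVC G (coverOf S)) : S ∈ L := by
  obtain ⟨T, hT, hST⟩ := (hG _).1 h
  rwa [coverOf_injective hST]

lemma adj_inl_inr_iff (hG : ∀ C, IsMinVC G C ↔ ∃ S ∈ L, C = coverOf S) {a b : Fin n} :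
    G.Adj (.inl a) (.inr b) ↔ ∀ S ∈ L, b ∈ S → a ∈ S := by
  refine ⟨fun hab S hS hb => by simpa [hb] using (isMinVC_coverOf_of_mem hG hS).1 hab,
    fun h => ?_⟩
  by_contra hab
  have hvc : IsVC G (univ \ {.inl a, .inr b}) := by
    intro u v huv
    by_contra! hout
    simp only [mem_sdiff, mem_univ, true_and, not_not, mem_insert, mem_singleton] at hout
    obtain ⟨rfl | rfl, rfl | rfl⟩ := hout
    · exact huv.ne rfl
    · exact hab huv
    · exact hab huv.symm
    · exact huv.ne rfl
  obtain ⟨C, hCsub, hC⟩ := hvc.exists_isMinVC_subset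
  obtain ⟨S, hS, rfl⟩ := (hG C).1 hC
  have ha : a ∉ S := fun ha => by simpa using hCsub (inl_mem_coverOf.2 ha)
  have hb : b ∈ S := by
    by_contra hb
    simpa using hCsub (inr_mem_coverOf.2 hb)
  exact ha (h S hS hb)

lemma bip_of_empty_mem_of_univ_mem (hG : ∀ C, IsMinVC G C ↔ ∃ S ∈ L, C = coverOf S)
    (h₀ : ∅ ∈ L) (h₁ : univ ∈ L) : Bip G :=
  ⟨fun a b hab => by simpa using (isMinVC_coverOf_of_mem hG h₀).1 hab,
    fun a b hab => by simpa using (isMinVC_coverOf_of_mem hG h₁).1 hab⟩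

end coverOf

section FullChain

variable {n : ℕ} {c : Fin (n + 1) → Finset (Fin n)}

lemma StrictMono.card_apply (hc : StrictMono c) (k : Fin (n + 1)) : #(c k) = k := by
  let f : Fin (n + 1) → Fin (n + 1) := fun k =>
    ⟨#(c k), Nat.lt_succ_of_le ((card_le_univ _).trans_eq (Fintype.card_fin n))⟩
  have hf : StrictMono f := fun k l hkl => Fin.mk_lt_mk.2 (card_lt_card (hc hkl))
  exact congrArg Fin.val hf.apply_eq

lemma StrictMono.apply_zero_eq_empty (hc : StrictMono c) : c 0 = ∅ :=
  card_eq_zero.1 (hc.card_apply 0)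

lemma StrictMono.apply_last_eq_univ (hc : StrictMono c) : c (Fin.last n) = univ :=
  eq_univ_of_card _ (by simp [hc.card_apply])

lemma StrictMono.eq_of_forall_mem_iff (hc : StrictMono c) {a b : Fin n}
    (hab : ∀ k, a ∈ c k ↔ b ∈ c k) : a = b := by
  by_contra hne
  have hnot : ∀ k, a ∉ c k := by
    intro k
    induction k using Fin.induction with
    | zero => simp [hc.apply_zero_eq_empty]
    | succ k ih =>
      intro ha
      have hsub : c k.castSucc ⊆ c k.succ := hc.monotone (Fin.castSucc_le_succ k)
      have hstep : #(c k.succ \ c k.castSucc) ≤ 1 := by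
        rw [card_sdiff_of_subset hsub, hc.card_apply, hc.card_apply]
        simp
      exact hne (card_le_one.1 hstep a (mem_sdiff.2 ⟨ha, ih⟩)
        b (mem_sdiff.2 ⟨(hab _).1 ha, fun hb => ih ((hab _).2 hb)⟩))
  exact hnot (Fin.last n) (by simp [hc.apply_last_eq_univ])

end FullChain

lemma exists_strictMono_chain_of_isPartialOrder {α : Type*} [Fintype α] {m : ℕ}
    (hm : Fintype.card α = m) (r : α → α → Prop) [IsPartialOrder α r] :
    ∃ c : Fin (m + 1) → Finset α, StrictMono c ∧ ∀ k a b, r a b → b ∈ c k → a ∈ c k := by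
  obtain ⟨s, hs, hrs⟩ := extend_partialOrder r
  let _ : LinearOrder α :=
    { le := s
      le_refl := refl_of s
      le_trans := fun _ _ _ => trans_of s
      le_antisymm := fun _ _ => antisymm_of s
      le_total := total_of s
      toDecidableLE := Classical.decRel _ }
  let e : α ≃o Fin m := (Fintype.orderIsoFinOfCardEq α hm).symm
  refine ⟨fun k => univ.filter fun a => (e a : ℕ) < k, fun k l hkl => ?_,
    fun k a b hab hb => ?_⟩
  · have hkm : (k : ℕ) < m := Nat.lt_of_lt_of_le hkl (Nat.lt_succ_iff.1 l.2)
    refine (ssubset_iff_of_subset fun a ha => ?_).2 ⟨e.symm ⟨k, hkm⟩, ?_⟩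
    · simp only [mem_filter, mem_univ, true_and] at ha ⊢
      exact ha.trans hkl
    · simpa using hkl
  · simp only [mem_filter, mem_univ, true_and] at hb ⊢
    exact lt_of_le_of_lt (e.monotone (hrs a b hab)) hb

section Main

variable {n : ℕ} {G : SimpleGraph (Fin n ⊕ Fin n)} {L : Set (Finset (Fin n))}

theorem exists_strictMono_mem_of_adj_iff
    (hG : ∀ C, IsMinVC G C ↔ ∃ S ∈ L, C = coverOf S)
    (r : Fin n → Fin n → Prop) [IsPartialOrder (Fin n) r]
    (hadj : ∀ u v, G.Adj u v ↔ ((∃ i j, r i j ∧ u = .inl i ∧ v = .inr j) ∨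
      (∃ i j, r i j ∧ u = .inr j ∧ v = .inl i))) :
    ∃ c : Fin (n + 1) → Finset (Fin n), StrictMono c ∧ ∀ i, c i ∈ L := by
  have hE : ∀ a b, G.Adj (.inl a) (.inr b) ↔ r a b := by simp [hadj]
  have hbip : Bip G := ⟨by simp [hadj], by simp [hadj]⟩
  obtain ⟨c, hc, hlower⟩ := exists_strictMono_chain_of_isPartialOrder (Fintype.card_fin n) r
  refine ⟨c, hc, fun k => mem_of_isMinVC_coverOf hG (IsVC.isMinVC_coverOf ?_ ?_)⟩
  · exact fun a => (hE a a).2 (refl_of r a)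
  · exact (isVC_coverOf_iff hbip).2 fun a b hab => hlower k a b ((hE a b).1 hab)

theorem exists_isPartialOrder_adj_iff_of_strictMono
    (hG : ∀ C, IsMinVC G C ↔ ∃ S ∈ L, C = coverOf S)
    {c : Fin (n + 1) → Finset (Fin n)} (hc : StrictMono c) (hcL : ∀ i, c i ∈ L) :
    ∃ r : Fin n → Fin n → Prop, IsPartialOrder (Fin n) r ∧
      ∀ u v, G.Adj u v ↔ ((∃ i j, r i j ∧ u = .inl i ∧ v = .inr j) ∨
        (∃ i j, r i j ∧ u = .inr j ∧ v = .inl i)) := by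
  have hbip : Bip G := bip_of_empty_mem_of_univ_mem hG
    (hc.apply_zero_eq_empty ▸ hcL 0) (hc.apply_last_eq_univ ▸ hcL (Fin.last n))
  refine ⟨fun a b => G.Adj (.inl a) (.inr b),
    { refl := fun a => (adj_inl_inr_iff hG).2 fun _ _ h => h
      trans := fun a b d hab hbd => (adj_inl_inr_iff hG).2 fun S hS hd =>
        (adj_inl_inr_iff hG).1 hab S hS ((adj_inl_inr_iff hG).1 hbd S hS hd)
      antisymm := fun a b hab hba => hc.eq_of_forall_mem_iff fun k =>
        ⟨(adj_inl_inr_iff hG).1 hba _ (hcL k), (adj_inl_inr_iff hG).1 hab _ (hcL k)⟩ }, ?_⟩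
  rintro (a | a) (b | b)
  · simp [hbip.1 a b]
  · simp
  · simp [G.adj_comm]
  · simp [hbip.2 a b]

end Main

theorem stmt_14_general {n : ℕ} (L : Set (Finset (Fin n)))
    (G : SimpleGraph (Fin n ⊕ Fin n))
    (hG : ∀ C : Finset (Fin n ⊕ Fin n), IsMinVC G C ↔ ∃ S ∈ L, C = coverOf S) :
    (∃ r : Fin n → Fin n → Prop, IsPartialOrder (Fin n) r ∧
      ∀ u v, G.Adj u v ↔ ((∃ i j, r i j ∧ u = Sum.inl i ∧ v = Sum.inr j) ∨
        (∃ i j, r i j ∧ u = Sum.inr j ∧ v = Sum.inl i))) ↔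
    (∃ c : Fin (n + 1) → Finset (Fin n), StrictMono c ∧ ∀ i, c i ∈ L) :=
  ⟨fun ⟨r, _, hadj⟩ => exists_strictMono_mem_of_adj_iff hG r hadj,
    fun ⟨_, hc, hcL⟩ => exists_isPartialOrder_adj_iff_of_strictMono hG hc hcL⟩

/-- the unmixed bipartite graph `G(L)` attached to a sublattice `L` of
the Boolean lattice is Cohen–Macaulay — i.e. (by the Herzog–Hibi characterization)
of the form `G_P` for a partial order on `[n]` — if and only if `L` is full. -/
theorem stmt_14 {n : ℕ} (L : Set (Finset (Fin n)))
    (hbot : (∅ : Finset (Fin n)) ∈ L) (htop : (Finset.univ : Finset (Fin n)) ∈ L)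
    (hlat : ∀ S ∈ L, ∀ T ∈ L, S ∪ T ∈ L ∧ S ∩ T ∈ L)
    (G : SimpleGraph (Fin n ⊕ Fin n)) (hbip : Bip G) (hunm : Unmixed G)
    (hG : ∀ C : Finset (Fin n ⊕ Fin n), IsMinVC G C ↔ ∃ S ∈ L, C = coverOf S) :
    (∃ r : Fin n → Fin n → Prop, IsPartialOrder (Fin n) r ∧
      ∀ u v, G.Adj u v ↔ ((∃ i j, r i j ∧ u = Sum.inl i ∧ v = Sum.inr j) ∨
        (∃ i j, r i j ∧ u = Sum.inr j ∧ v = Sum.inl i))) ↔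
    (∃ c : Fin (n + 1) → Finset (Fin n), StrictMono c ∧ ∀ i, c i ∈ L) :=
  stmt_14_general L G hG
end
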